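/- arXiv:1703.07589 — 2 statements merged into one kernel-verified Lean document; each statement's English description precedes it below -/
import Mathlib

section
/- Riccati update propagation: if P̃ = P + V C† Vᵀ with P ⪰ 0, C ⪰ 0, range(Vᵀ) ⊆ range(C), then the Riccati step applied to P̃ equals the Riccati step applied to P plus V' C'† V'ᵀ, where V' := (Aᵀ - H̃ G̃† Bᵀ) V, C' := C - Vᵀ B G̃† Bᵀ V, G̃ := Qw + BᵀP̃B, H̃ := Qxw + AᵀP̃B; moreover C' ⪰ 0 and range(V'ᵀ) ⊆ range(C'). -/
/-!
Write `Δ = BᵀV`, `W = AᵀV`, `G = Qw + BᵀPB`, `H = Qxw + AᵀPB`. Then `G̃ = G + ΔC†Δᵀ`,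
`H̃ = H + WC†Δᵀ`, and the claimed identity reduces to
`WC†Wᵀ + HG†Hᵀ = H̃G̃†H̃ᵀ + V'C'†V'ᵀ`.
Both sides are the value `Rᵀz` of a solution `z` of the symmetric block system
`[[C, Δᵀ], [Δ, G̃]] z = R = [Wᵀ; H̃ᵀ]`, and this value does not depend on the solution.
Eliminating `C` first (Schur complement `G̃ - ΔC†Δᵀ = G`) gives the left side; eliminating `G̃`
first (Schur complement `C - ΔᵀG̃†Δ = C'`) gives the right side.
The range conditions that make these eliminations valid come from positive semidefiniteness.
For the second one, `C' = EᵀGE + (1 - C†ΔᵀE)ᵀC(1 - C†ΔᵀE)` with `E = G̃†Δ`,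
so `C' ⪰ 0` and `ker C' ⊆ ker V'`.
-/

open Matrix

/-- The four Moore–Penrose conditions: `Dp` is the Moore–Penrose pseudoinverse of `D`. -/
def IsMP {α : Type*} [Fintype α] [DecidableEq α] (D Dp : Matrix α α ℝ) : Prop :=
  D * Dp * D = D ∧ Dp * D * Dp = Dp ∧ (D * Dp)ᵀ = D * Dp ∧ (Dp * D)ᵀ = Dp * D

theorem Matrix.mul_eq_zero_of_ker_le {n m r s : Type*} [Fintype n] {D : Matrix m n ℝ}
    {Y : Matrix r n ℝ} (hker : ∀ v, D *ᵥ v = 0 → Y *ᵥ v = 0) {M : Matrix n s ℝ}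
    (hM : D * M = 0) : Y * M = 0 := by
  ext i j
  exact congrFun (hker (Mᵀ j) (funext fun i => congrFun (congrFun hM i) j)) i

namespace Matrix.PosSemidef

variable {n m l : Type*} {A B : Matrix n n ℝ} {v : n → ℝ}

theorem transpose_eq (hA : A.PosSemidef) : Aᵀ = A :=
  (isHermitian_iff_isSymm.mp hA.isHermitian).eq

theorem toBlocks₂₂ {M : Matrix (m ⊕ n) (m ⊕ n) ℝ} (hM : M.PosSemidef) :
    M.toBlocks₂₂.PosSemidef :=
  hM.submatrix Sum.inr

variable [Fintype n] [Fintype m]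

theorem transpose_mul_mul_same (hA : A.PosSemidef) (M : Matrix n m ℝ) :
    (Mᵀ * A * M).PosSemidef := by
  simpa only [conjTranspose_eq_transpose_of_trivial] using hA.conjTranspose_mul_mul_same M

theorem mulVec_eq_zero_of_dotProduct (hA : A.PosSemidef) (h : v ⬝ᵥ A *ᵥ v = 0) : A *ᵥ v = 0 :=
  (hA.dotProduct_mulVec_zero_iff v).mp (by simpa using h)

theorem mulVec_eq_zero_of_add_mulVec_eq_zero (hA : A.PosSemidef) (hB : B.PosSemidef)
    (h : (A + B) *ᵥ v = 0) : A *ᵥ v = 0 ∧ B *ᵥ v = 0 := by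
  have hsum : v ⬝ᵥ A *ᵥ v + v ⬝ᵥ B *ᵥ v = 0 := by
    rw [← dotProduct_add, ← add_mulVec, h, dotProduct_zero]
  have hA₀ : 0 ≤ v ⬝ᵥ A *ᵥ v := by simpa using hA.dotProduct_mulVec_nonneg v
  have hB₀ : 0 ≤ v ⬝ᵥ B *ᵥ v := by simpa using hB.dotProduct_mulVec_nonneg v
  exact ⟨hA.mulVec_eq_zero_of_dotProduct (by linarith),
    hB.mulVec_eq_zero_of_dotProduct (by linarith)⟩

theorem mulVec_mulVec_eq_zero_of_transpose_mul_mul {M : Matrix n m ℝ} {w : m → ℝ}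
    (hA : A.PosSemidef) (h : (Mᵀ * A * M) *ᵥ w = 0) : A *ᵥ (M *ᵥ w) = 0 := by
  refine hA.mulVec_eq_zero_of_dotProduct ?_
  have hquad : w ⬝ᵥ (Mᵀ * A * M) *ᵥ w = (M *ᵥ w) ⬝ᵥ A *ᵥ (M *ᵥ w) := by
    rw [Matrix.mul_assoc, ← mulVec_mulVec, dotProduct_mulVec, vecMul_transpose, ← mulVec_mulVec]
  rw [← hquad, h, dotProduct_zero]

theorem mulVec_eq_zero_of_fromBlocks [Fintype l] {X : Matrix l l ℝ} {Y : Matrix l n ℝ}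
    {Y' : Matrix n l ℝ} (h : (fromBlocks X Y Y' A).PosSemidef) (hv : A *ᵥ v = 0) :
    Y *ᵥ v = 0 := by
  have hmul : fromBlocks X Y Y' A *ᵥ Sum.elim 0 v = Sum.elim (Y *ᵥ v) 0 := by
    simp [fromBlocks_mulVec, hv]
  have hzero := h.mulVec_eq_zero_of_dotProduct (v := Sum.elim 0 v)
    (by rw [hmul, sumElim_dotProduct_sumElim]; simp)
  rw [hmul] at hzero
  exact funext fun i => congrFun hzero (Sum.inl i)

end Matrix.PosSemidef

namespace IsMP

variable {n r : Type*} [Fintype n] [DecidableEq n] {D X Y : Matrix n n ℝ}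

theorem unique (hX : IsMP D X) (hY : IsMP D Y) : X = Y := by
  obtain ⟨X1, X2, X3, X4⟩ := hX
  obtain ⟨Y1, Y2, Y3, Y4⟩ := hY
  have hX : X = X * D * Y := by
    calc X = X * D * X := X2.symm
    _ = X * (D * X)ᵀ := by rw [X3, Matrix.mul_assoc]
    _ = X * ((D * Y * D) * X)ᵀ := by rw [Y1]
    _ = X * (D * X)ᵀ * (D * Y)ᵀ := by simp only [transpose_mul, Matrix.mul_assoc]
    _ = X * (D * X) * (D * Y) := by rw [X3, Y3]
    _ = X * D * X * D * Y := by simp only [Matrix.mul_assoc]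
    _ = X * D * Y := by rw [X2]
  have hY : Y = X * D * Y := by
    calc Y = Y * D * Y := Y2.symm
    _ = (Y * D)ᵀ * Y := by rw [Y4]
    _ = ((Y * (D * X * D))ᵀ) * Y := by rw [X1]
    _ = (X * D)ᵀ * (Y * D)ᵀ * Y := by simp only [transpose_mul, Matrix.mul_assoc]
    _ = X * D * (Y * D) * Y := by rw [X4, Y4]
    _ = X * D * (Y * D * Y) := by simp only [Matrix.mul_assoc]
    _ = X * D * Y := by rw [Y2]
  rw [hX, ← hY]

theorem transpose (h : IsMP D X) : IsMP Dᵀ Xᵀ := by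
  obtain ⟨h1, h2, h3, h4⟩ := h
  refine ⟨?_, ?_, ?_, ?_⟩
  · conv_rhs => rw [← h1]
    simp only [transpose_mul, Matrix.mul_assoc]
  · conv_rhs => rw [← h2]
    simp only [transpose_mul, Matrix.mul_assoc]
  · rw [← transpose_mul, transpose_transpose, h4]
  · rw [← transpose_mul, transpose_transpose, h3]

theorem transpose_eq (hD : Dᵀ = D) (h : IsMP D X) : Xᵀ = X :=
  (hD ▸ h.transpose).unique h

theorem posSemidef (hD : D.PosSemidef) (h : IsMP D X) : X.PosSemidef := by
  have := hD.transpose_mul_mul_same X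
  rwa [h.transpose_eq hD.transpose_eq, h.2.1] at this

theorem mul_mul_eq_of_eq_mul {Y Z : Matrix n r ℝ} (h : IsMP D X) (hY : Y = D * Z) :
    D * X * Y = Y := by
  rw [hY, ← Matrix.mul_assoc, h.1]

theorem mul_mul_transpose_eq_of_ker (hD : Dᵀ = D) (h : IsMP D X) {Y : Matrix r n ℝ} (hker : ∀ v, D *ᵥ v = 0 → Y *ᵥ v = 0) : D * X * Yᵀ = Yᵀ := by
  have hY : Y * (1 - X * D) = 0 := mul_eq_zero_of_ker_le hker (by
    rw [Matrix.mul_sub, Matrix.mul_one, ← Matrix.mul_assoc, h.1, sub_self])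
  rw [Matrix.mul_sub, Matrix.mul_one, sub_eq_zero] at hY
  conv_rhs => rw [hY]
  simp only [transpose_mul, hD, h.transpose_eq hD, Matrix.mul_assoc]

end IsMP

section BlockSystem

variable {p q r : Type*} [Fintype p] [Fintype q] {X Xp : Matrix p p ℝ} {Y : Matrix p q ℝ}
  {Z S Sp : Matrix q q ℝ} {R₁ a₁ b₁ : Matrix p r ℝ} {R₂ R a₂ b₂ : Matrix q r ℝ}

theorem blockSystem_value_eq (hX : Xᵀ = X) (hZ : Zᵀ = Z)
    (ha : X * a₁ + Y * a₂ = R₁ ∧ Yᵀ * a₁ + Z * a₂ = R₂)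
    (hb : X * b₁ + Y * b₂ = R₁ ∧ Yᵀ * b₁ + Z * b₂ = R₂) :
    R₁ᵀ * a₁ + R₂ᵀ * a₂ = R₁ᵀ * b₁ + R₂ᵀ * b₂ := by
  have value_eq : ∀ (c₁ : Matrix p r ℝ) (c₂ : Matrix q r ℝ),
      X * c₁ + Y * c₂ = R₁ ∧ Yᵀ * c₁ + Z * c₂ = R₂ →
      R₁ᵀ * c₁ + R₂ᵀ * c₂ = b₁ᵀ * R₁ + b₂ᵀ * R₂ := by
    rintro c₁ c₂ ⟨hc₁, hc₂⟩
    calc R₁ᵀ * c₁ + R₂ᵀ * c₂ = (X * b₁ + Y * b₂)ᵀ * c₁ + (Yᵀ * b₁ + Z * b₂)ᵀ * c₂ := by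
          rw [hb.1, hb.2]
      _ = b₁ᵀ * (X * c₁ + Y * c₂) + b₂ᵀ * (Yᵀ * c₁ + Z * c₂) := by
          simp only [transpose_add, transpose_mul, transpose_transpose, hX, hZ, Matrix.add_mul,
            Matrix.mul_add, Matrix.mul_assoc]
          abel
      _ = b₁ᵀ * R₁ + b₂ᵀ * R₂ := by rw [hc₁, hc₂]
  rw [value_eq a₁ a₂ ha, value_eq b₁ b₂ hb]

theorem exists_blockSystem_solution_of_schur (hXp : Xpᵀ = Xp) (hXY : X * Xp * Y = Y)
    (hXR : X * Xp * R₁ = R₁) (hS : Z - Yᵀ * Xp * Y = S) (hR : R₂ - Yᵀ * Xp * R₁ = R)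
    (hSR : S * Sp * R = R) :
    ∃ (z₁ : Matrix p r ℝ) (z₂ : Matrix q r ℝ),
      (X * z₁ + Y * z₂ = R₁ ∧ Yᵀ * z₁ + Z * z₂ = R₂) ∧
      R₁ᵀ * z₁ + R₂ᵀ * z₂ = R₁ᵀ * Xp * R₁ + Rᵀ * Sp * R := by
  refine ⟨Xp * (R₁ - Y * (Sp * R)), Sp * R, ⟨?_, ?_⟩, ?_⟩
  · rw [← Matrix.mul_assoc, Matrix.mul_sub, hXR, ← Matrix.mul_assoc (X * Xp), hXY, sub_add_cancel]
  · calc Yᵀ * (Xp * (R₁ - Y * (Sp * R))) + Z * (Sp * R)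
        = Yᵀ * Xp * R₁ + (Z - Yᵀ * Xp * Y) * Sp * R := by
          simp only [Matrix.mul_sub, Matrix.sub_mul, Matrix.mul_assoc]; abel
      _ = R₂ := by rw [hS, hSR, ← hR]; abel
  · rw [← hR]
    simp only [transpose_sub, transpose_mul, transpose_transpose, hXp, Matrix.mul_sub,
      Matrix.sub_mul, Matrix.mul_assoc]
    abel

end BlockSystem

section RiccatiIncrement

variable {k m n : Type*} [Fintype k] [Fintype m] {C Cp Cp' : Matrix k k ℝ}
  {G Gp Gtp : Matrix m m ℝ} {Δ : Matrix m k ℝ} {W : Matrix n k ℝ} {H : Matrix n m ℝ}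

theorem mulVec_eq_zero_of_add_mul_mul_transpose (hG : G.PosSemidef) (hCp : Cp.PosSemidef)
    (hCΔ : C * Cp * Δᵀ = Δᵀ) {v : m → ℝ} (hv : (G + Δ * Cp * Δᵀ) *ᵥ v = 0) :
    G *ᵥ v = 0 ∧ Δᵀ *ᵥ v = 0 := by
  have hΔCpΔ : (Δᵀᵀ * Cp * Δᵀ).PosSemidef := hCp.transpose_mul_mul_same Δᵀ
  rw [transpose_transpose] at hΔCpΔ
  obtain ⟨hGv, hΔCpΔv⟩ := hG.mulVec_eq_zero_of_add_mulVec_eq_zero hΔCpΔ hv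
  have hCpΔv : Cp *ᵥ (Δᵀ *ᵥ v) = 0 :=
    hCp.mulVec_mulVec_eq_zero_of_transpose_mul_mul (by rwa [transpose_transpose])
  refine ⟨hGv, ?_⟩
  rw [← hCΔ, ← mulVec_mulVec, ← mulVec_mulVec, hCpΔv, mulVec_zero]

theorem posSemidef_add_mul_mul_transpose (hG : G.PosSemidef) (hCp : Cp.PosSemidef) :
    (G + Δ * Cp * Δᵀ).PosSemidef := by
  simpa only [transpose_transpose] using hG.add (hCp.transpose_mul_mul_same Δᵀ)

variable [DecidableEq m]

theorem mul_mul_eq_of_add_mul_mul_transpose (hG : G.PosSemidef) (hCp : Cp.PosSemidef)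
    (hGH : ∀ v, G *ᵥ v = 0 → H *ᵥ v = 0) (hCΔ : C * Cp * Δᵀ = Δᵀ)
    (hGtp : IsMP (G + Δ * Cp * Δᵀ) Gtp) :
    (G + Δ * Cp * Δᵀ) * Gtp * Δ = Δ ∧
      (G + Δ * Cp * Δᵀ) * Gtp * (H + W * Cp * Δᵀ)ᵀ = (H + W * Cp * Δᵀ)ᵀ := by
  have hGtT := (posSemidef_add_mul_mul_transpose (Δ := Δ) hG hCp).transpose_eq
  refine ⟨?_, hGtp.mul_mul_transpose_eq_of_ker hGtT fun v hv => ?_⟩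
  · simpa only [transpose_transpose] using hGtp.mul_mul_transpose_eq_of_ker hGtT
      fun v hv => (mulVec_eq_zero_of_add_mul_mul_transpose hG hCp hCΔ hv).2
  · obtain ⟨hGv, hΔv⟩ := mulVec_eq_zero_of_add_mul_mul_transpose hG hCp hCΔ hv
    rw [add_mulVec, hGH v hGv, ← mulVec_mulVec, hΔv, mulVec_zero, add_zero]

variable [DecidableEq k]

theorem sub_transpose_mul_mul_eq_add (hC : Cᵀ = C) (hCpT : Cpᵀ = Cp)
    (hGtp : IsMP (G + Δ * Cp * Δᵀ) Gtp) (hGtpT : Gtpᵀ = Gtp) (hCΔ : C * Cp * Δᵀ = Δᵀ) :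
    C - Δᵀ * Gtp * Δ = (Gtp * Δ)ᵀ * G * (Gtp * Δ) +
      (1 - Cp * Δᵀ * (Gtp * Δ))ᵀ * C * (1 - Cp * Δᵀ * (Gtp * Δ)) := by
  set E := Gtp * Δ
  have hΔC : Δ * (Cp * C) = Δ := by
    simpa only [transpose_mul, transpose_transpose, hC, hCpT, Matrix.mul_assoc] using
      congrArg transpose hCΔ
  have hCΔ' : ∀ X : Matrix m k ℝ, C * (Cp * (Δᵀ * X)) = Δᵀ * X := fun X => by
    rw [← Matrix.mul_assoc Cp, ← Matrix.mul_assoc C, ← Matrix.mul_assoc C, hCΔ]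
  have hEΔ : Eᵀ * Δ = Δᵀ * E := by
    simp only [E, transpose_mul, hGtpT, Matrix.mul_assoc]
  have hEGtE : Eᵀ * (G + Δ * Cp * Δᵀ) * E = Δᵀ * E := by
    set Gt := G + Δ * Cp * Δᵀ
    rw [transpose_mul, hGtpT, Matrix.mul_assoc, Matrix.mul_assoc, ← Matrix.mul_assoc Gt,
      ← Matrix.mul_assoc Gtp, ← Matrix.mul_assoc Gtp Gt, hGtp.2.1]
  have hsq : (1 - Cp * Δᵀ * E)ᵀ * C * (1 - Cp * Δᵀ * E) =
      C - Eᵀ * Δ - Δᵀ * E + Eᵀ * (Δ * Cp * Δᵀ) * E := by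
    simp only [transpose_sub, transpose_one, transpose_mul, transpose_transpose, hCpT,
      Matrix.sub_mul, Matrix.mul_sub, Matrix.one_mul, Matrix.mul_one, Matrix.mul_assoc, hCΔ', hΔC]
    abel
  rw [Matrix.mul_add, Matrix.add_mul] at hEGtE
  rw [hsq, hEΔ, Matrix.mul_assoc Δᵀ, ← hEGtE]
  abel

theorem mulVec_eq_zero_of_sub_transpose_mul_mul (hC : C.PosSemidef) (hCpT : Cpᵀ = Cp)
    (hG : G.PosSemidef) (hGH : ∀ v, G *ᵥ v = 0 → H *ᵥ v = 0)
    (hGtp : IsMP (G + Δ * Cp * Δᵀ) Gtp) (hGtpT : Gtpᵀ = Gtp)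
    (hCΔ : C * Cp * Δᵀ = Δᵀ) (hCW : C * Cp * Wᵀ = Wᵀ) {z : k → ℝ}
    (hz : (C - Δᵀ * Gtp * Δ) *ᵥ z = 0) : (W - (H + W * Cp * Δᵀ) * Gtp * Δ) *ᵥ z = 0 := by
  set E := Gtp * Δ
  set F := 1 - Cp * Δᵀ * E
  rw [sub_transpose_mul_mul_eq_add hC.transpose_eq hCpT hGtp hGtpT hCΔ] at hz
  obtain ⟨hGE, hCF⟩ := (hG.transpose_mul_mul_same E).mulVec_eq_zero_of_add_mulVec_eq_zero
    (hC.transpose_mul_mul_same F) hz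
  have hWCpC : W * Cp * C = W := by
    simpa only [transpose_mul, transpose_transpose, hC.transpose_eq, hCpT, Matrix.mul_assoc]
      using congrArg transpose hCW
  have hV' : W - (H + W * Cp * Δᵀ) * Gtp * Δ = W * Cp * (C * F) - H * E := by
    simp only [F, E, Matrix.mul_sub, Matrix.mul_one, Matrix.add_mul, ← Matrix.mul_assoc, hWCpC]
    abel
  rw [hV', sub_mulVec, ← mulVec_mulVec z (W * Cp), ← mulVec_mulVec z C, ← mulVec_mulVec z H,
    hGH _ (hG.mulVec_mulVec_eq_zero_of_transpose_mul_mul hGE),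
    hC.mulVec_mulVec_eq_zero_of_transpose_mul_mul hCF, mulVec_zero, sub_zero]

theorem riccati_increment (hC : C.PosSemidef) (hCp : IsMP C Cp) (hG : G.PosSemidef)
    (hGp : IsMP G Gp) (hGH : ∀ v, G *ᵥ v = 0 → H *ᵥ v = 0) (hCΔ : C * Cp * Δᵀ = Δᵀ)
    (hCW : C * Cp * Wᵀ = Wᵀ) (hGtp : IsMP (G + Δ * Cp * Δᵀ) Gtp)
    (hCp' : IsMP (C - Δᵀ * Gtp * Δ) Cp') :
    W * Cp * Wᵀ + H * Gp * Hᵀ =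
      (H + W * Cp * Δᵀ) * Gtp * (H + W * Cp * Δᵀ)ᵀ +
        (W - (H + W * Cp * Δᵀ) * Gtp * Δ) * Cp' * (W - (H + W * Cp * Δᵀ) * Gtp * Δ)ᵀ ∧
    (C - Δᵀ * Gtp * Δ).PosSemidef ∧
    (C - Δᵀ * Gtp * Δ) * Cp' * (W - (H + W * Cp * Δᵀ) * Gtp * Δ)ᵀ =
      (W - (H + W * Cp * Δᵀ) * Gtp * Δ)ᵀ := by
  have hCT := hC.transpose_eq
  have hCpT := hCp.transpose_eq hCT
  have hCpPSD := hCp.posSemidef hC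
  obtain ⟨hGtΔ, hGtHt⟩ := mul_mul_eq_of_add_mul_mul_transpose (W := W) hG hCpPSD hGH hCΔ hGtp
  set Gt := G + Δ * Cp * Δᵀ
  set Ht := H + W * Cp * Δᵀ with hHt
  set C' := C - Δᵀ * Gtp * Δ with hC'
  set V' := W - Ht * Gtp * Δ with hV'
  have hGtT : Gtᵀ = Gt := (posSemidef_add_mul_mul_transpose (Δ := Δ) hG hCpPSD).transpose_eq
  have hGtpT := hGtp.transpose_eq hGtT
  have hC'PSD : C'.PosSemidef := by
    rw [hC', sub_transpose_mul_mul_eq_add hCT hCpT hGtp hGtpT hCΔ]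
    exact (hG.transpose_mul_mul_same _).add (hC.transpose_mul_mul_same _)
  have hC'V' : C' * Cp' * V'ᵀ = V'ᵀ :=
    hCp'.mul_mul_transpose_eq_of_ker hC'PSD.transpose_eq
      fun z hz => mulVec_eq_zero_of_sub_transpose_mul_mul hC hCpT hG hGH hGtp hGtpT hCΔ hCW hz
  refine ⟨?_, hC'PSD, hC'V'⟩
  obtain ⟨a₁, a₂, ha, hva⟩ := exists_blockSystem_solution_of_schur (Z := Gt) (R₂ := Htᵀ) (S := G)
    (R := Hᵀ) hCpT hCΔ hCW (by simp only [transpose_transpose, Gt]; abel)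
    (by simp only [hHt, transpose_add, transpose_mul, transpose_transpose, hCpT,
      Matrix.mul_assoc]; abel)
    (hGp.mul_mul_transpose_eq_of_ker hG.transpose_eq hGH)
  obtain ⟨b₁, b₂, hb, hvb⟩ := exists_blockSystem_solution_of_schur (Z := C) (R₂ := Wᵀ) (S := C')
    (R := V'ᵀ) hGtpT hGtΔ hGtHt rfl
    (by simp only [hV', transpose_sub, transpose_mul, hGtpT, Matrix.mul_assoc])
    hC'V'
  have hab := blockSystem_value_eq hCT hGtT ha
    ⟨by rw [add_comm, hb.2], by rw [transpose_transpose, add_comm, hb.1]⟩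
  simp only [transpose_transpose] at hva hvb hab
  rw [← hva, hab, add_comm, hvb]

end RiccatiIncrement

theorem posSemidef_fromBlocks_add_fromCols_transpose_mul_mul {n m : Type*} [Fintype n]
    [Fintype m] {Qx A P : Matrix n n ℝ} {Qxw B : Matrix n m ℝ} {Qw : Matrix m m ℝ}
    (hQ : (fromBlocks Qx Qxw Qxwᵀ Qw).PosSemidef) (hP : P.PosSemidef) :
    (fromBlocks (Qx + Aᵀ * P * A) (Qxw + Aᵀ * P * B)
      (Qxwᵀ + Bᵀ * P * A) (Qw + Bᵀ * P * B)).PosSemidef := by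
  have hAB : (fromCols A B)ᵀ * P * fromCols A B =
      fromBlocks (Aᵀ * P * A) (Aᵀ * P * B) (Bᵀ * P * A) (Bᵀ * P * B) := by
    rw [transpose_fromCols, Matrix.mul_assoc, mul_fromCols, fromRows_mul_fromCols]
    simp only [Matrix.mul_assoc]
  simpa only [hAB, fromBlocks_add] using hQ.add (hP.transpose_mul_mul_same (fromCols A B))

theorem riccati_update_propagation {n m k : ℕ}
    (A : Matrix (Fin n) (Fin n) ℝ) (B : Matrix (Fin n) (Fin m) ℝ)
    (P : Matrix (Fin n) (Fin n) ℝ)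
    (Qx : Matrix (Fin n) (Fin n) ℝ) (Qxw : Matrix (Fin n) (Fin m) ℝ)
    (Qw : Matrix (Fin m) (Fin m) ℝ)
    (V : Matrix (Fin n) (Fin k) ℝ) (C Cp : Matrix (Fin k) (Fin k) ℝ)
    (Gp Gtp : Matrix (Fin m) (Fin m) ℝ) (Cp' : Matrix (Fin k) (Fin k) ℝ)
    (hQ : (Matrix.fromBlocks Qx Qxw Qxwᵀ Qw).PosSemidef)
    (hP : P.PosSemidef) (hC : C.PosSemidef)
    (hV : ∃ Y : Matrix (Fin k) (Fin n) ℝ, Vᵀ = C * Y)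
    (hCp : IsMP C Cp)
    (hGp : IsMP (Qw + Bᵀ * P * B) Gp)
    (hGtp : IsMP (Qw + Bᵀ * (P + V * Cp * Vᵀ) * B) Gtp)
    (hCp' : IsMP (C - Vᵀ * B * Gtp * Bᵀ * V) Cp') :
    ((Qx + Aᵀ * (P + V * Cp * Vᵀ) * A) -
      (Qxw + Aᵀ * (P + V * Cp * Vᵀ) * B) * Gtp *
        (Qxw + Aᵀ * (P + V * Cp * Vᵀ) * B)ᵀ =
    ((Qx + Aᵀ * P * A) - (Qxw + Aᵀ * P * B) * Gp * (Qxw + Aᵀ * P * B)ᵀ) +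
      ((Aᵀ - (Qxw + Aᵀ * (P + V * Cp * Vᵀ) * B) * Gtp * Bᵀ) * V) * Cp' *
        ((Aᵀ - (Qxw + Aᵀ * (P + V * Cp * Vᵀ) * B) * Gtp * Bᵀ) * V)ᵀ) ∧
    (C - Vᵀ * B * Gtp * Bᵀ * V).PosSemidef ∧
    (∃ Y : Matrix (Fin k) (Fin n) ℝ,
      ((Aᵀ - (Qxw + Aᵀ * (P + V * Cp * Vᵀ) * B) * Gtp * Bᵀ) * V)ᵀ =
        (C - Vᵀ * B * Gtp * Bᵀ * V) * Y) := by
  obtain ⟨Y, hY⟩ := hV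
  have hblock := posSemidef_fromBlocks_add_fromCols_transpose_mul_mul (A := A) (B := B) hQ hP
  have hPt : ∀ {l l' : Type} (M : Matrix (Fin n) l ℝ) (N : Matrix (Fin n) l' ℝ),
      Mᵀ * (P + V * Cp * Vᵀ) * N = Mᵀ * P * N + (Mᵀ * V) * Cp * (Nᵀ * V)ᵀ := by
    intro l l' M N
    simp only [Matrix.mul_add, Matrix.add_mul, transpose_mul, transpose_transpose,
      Matrix.mul_assoc]
  have hC' : C - Vᵀ * B * Gtp * Bᵀ * V = C - (Bᵀ * V)ᵀ * Gtp * (Bᵀ * V) := by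
    simp only [transpose_mul, transpose_transpose, Matrix.mul_assoc]
  have hV' : ∀ X : Matrix (Fin n) (Fin m) ℝ,
      (Aᵀ - X * Gtp * Bᵀ) * V = Aᵀ * V - X * Gtp * (Bᵀ * V) := by
    intro X
    simp only [Matrix.sub_mul, Matrix.mul_assoc]
  simp only [hPt, ← add_assoc] at hGtp ⊢
  rw [hC'] at hCp' ⊢
  rw [hV']
  have hCΔ : C * Cp * (Bᵀ * V)ᵀ = (Bᵀ * V)ᵀ :=
    hCp.mul_mul_eq_of_eq_mul (by rw [transpose_mul, transpose_transpose, hY, Matrix.mul_assoc])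
  have hCW : C * Cp * (Aᵀ * V)ᵀ = (Aᵀ * V)ᵀ :=
    hCp.mul_mul_eq_of_eq_mul (by rw [transpose_mul, transpose_transpose, hY, Matrix.mul_assoc])
  obtain ⟨hsum, hC'PSD, hC'V'⟩ := riccati_increment hC hCp (by simpa using hblock.toBlocks₂₂) hGp
    (fun _ => hblock.mulVec_eq_zero_of_fromBlocks) hCΔ hCW hGtp hCp'
  refine ⟨?_, hC'PSD, _, hC'V'.symm.trans (Matrix.mul_assoc _ _ _)⟩
  rw [eq_sub_of_add_eq hsum]
  abel
end

section
/- For a symmetric PSD matrix [[G, g],[gᵀ, g0]] with G ∈ ℝ^{m×m}, g ∈ ℝ^m, g0 ∈ ℝ, the scalar generalized Schur complement g0 - gᵀ G† g is nonnegative, and if g0 - gᵀ G† g = 0 then for any H ∈ ℝ^{n×m}, h ∈ ℝ^n such that [[F, H, h],[Hᵀ, G, g],[hᵀ, gᵀ, g0]] ⪰ 0 for some F, we have h - H G† g = 0. -/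
open Matrix

/-- Uniqueness of the Moore–Penrose pseudoinverse. -/
lemma IsMP.unique_s12 {α : Type*} [Fintype α] [DecidableEq α] {D X Y : Matrix α α ℝ}
    (hX : IsMP D X) (hY : IsMP D Y) : X = Y := by
  obtain ⟨hX1, hX2, hX3, hX4⟩ := hX
  obtain ⟨hY1, hY2, hY3, hY4⟩ := hY
  have t1 : Dᵀ = Dᵀ * Yᵀ * Dᵀ := by
    conv_lhs => rw [← hY1]
    simp [transpose_mul, mul_assoc]
  have hDX : D * X = D * Y := by
    calc D * X = Xᵀ * Dᵀ := by rw [← hX3, transpose_mul]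
    _ = Xᵀ * (Dᵀ * Yᵀ * Dᵀ) := by rw [← t1]
    _ = (Xᵀ * Dᵀ) * (Yᵀ * Dᵀ) := by simp only [mul_assoc]
    _ = (D * X)ᵀ * (D * Y)ᵀ := by rw [transpose_mul, transpose_mul]
    _ = (D * X) * (D * Y) := by rw [hX3, hY3]
    _ = (D * X * D) * Y := by simp only [mul_assoc]
    _ = D * Y := by rw [hX1]
  have hXD : X * D = Y * D := by
    calc X * D = Dᵀ * Xᵀ := by rw [← hX4, transpose_mul]
    _ = (Dᵀ * Yᵀ * Dᵀ) * Xᵀ := by rw [← t1]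
    _ = (Dᵀ * Yᵀ) * (Dᵀ * Xᵀ) := by simp only [mul_assoc]
    _ = (Y * D)ᵀ * (X * D)ᵀ := by rw [transpose_mul, transpose_mul]
    _ = (Y * D) * (X * D) := by rw [hX4, hY4]
    _ = Y * (D * X * D) := by simp only [mul_assoc]
    _ = Y * D := by rw [hX1]
  calc X = X * D * X := hX2.symm
  _ = Y * D * X := by rw [hXD]
  _ = Y * (D * X) := by rw [mul_assoc]
  _ = Y * (D * Y) := by rw [hDX]
  _ = Y * D * Y := by rw [mul_assoc]
  _ = Y := hY2

theorem scalar_bordered_range_condition {n m : ℕ}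
    (F : Matrix (Fin n) (Fin n) ℝ) (H : Matrix (Fin n) (Fin m) ℝ)
    (h : Matrix (Fin n) (Fin 1) ℝ) (G Gp : Matrix (Fin m) (Fin m) ℝ)
    (g : Matrix (Fin m) (Fin 1) ℝ) (g0 : Matrix (Fin 1) (Fin 1) ℝ)
    (hM : (Matrix.fromBlocks F (Matrix.fromCols H h)
            (Matrix.fromRows Hᵀ hᵀ)
            (Matrix.fromBlocks G g gᵀ g0)).PosSemidef)
    (hGp : IsMP G Gp) :
    (g0 - gᵀ * Gp * g).PosSemidef ∧
    (g0 - gᵀ * Gp * g = 0 → h - H * Gp * g = 0) := by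
  obtain ⟨B, hB⟩ : ∃ B, _ = Bᴴ * B := by
    open scoped MatrixOrder in
    obtain ⟨B, hB⟩ := CStarAlgebra.nonneg_iff_eq_star_mul_self.mp hM.nonneg
    exact ⟨B, hB⟩
  obtain ⟨B1, hB1⟩ : ∃ X : Matrix (Fin n ⊕ (Fin m ⊕ Fin 1)) (Fin n) ℝ,
      X = B.submatrix id Sum.inl := ⟨_, rfl⟩
  obtain ⟨B2, hB2⟩ : ∃ X : Matrix (Fin n ⊕ (Fin m ⊕ Fin 1)) (Fin m) ℝ,
      X = B.submatrix id (Sum.inr ∘ Sum.inl) := ⟨_, rfl⟩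
  obtain ⟨B3, hB3⟩ : ∃ X : Matrix (Fin n ⊕ (Fin m ⊕ Fin 1)) (Fin 1) ℝ,
      X = B.submatrix id (Sum.inr ∘ Sum.inr) := ⟨_, rfl⟩
  have hG : G = B2ᵀ * B2 := by
    ext i j
    have := congrFun (congrFun hB (Sum.inr (Sum.inl i))) (Sum.inr (Sum.inl j))
    simpa [hB2, mul_apply, fromBlocks, conjTranspose_apply] using this
  have hg : g = B2ᵀ * B3 := by
    ext i j
    have := congrFun (congrFun hB (Sum.inr (Sum.inl i))) (Sum.inr (Sum.inr j))
    simpa [hB2, hB3, mul_apply, fromBlocks, conjTranspose_apply] using this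
  have hg0 : g0 = B3ᵀ * B3 := by
    ext i j
    have := congrFun (congrFun hB (Sum.inr (Sum.inr i))) (Sum.inr (Sum.inr j))
    simpa [hB3, mul_apply, fromBlocks, conjTranspose_apply] using this
  have hH : H = B1ᵀ * B2 := by
    ext i j
    have := congrFun (congrFun hB (Sum.inl i)) (Sum.inr (Sum.inl j))
    simpa [hB1, hB2, mul_apply, fromBlocks, fromCols, conjTranspose_apply] using this
  have hh : h = B1ᵀ * B3 := by
    ext i j
    have := congrFun (congrFun hB (Sum.inl i)) (Sum.inr (Sum.inr j))
    simpa [hB1, hB3, mul_apply, fromBlocks, fromCols, conjTranspose_apply] using this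
  obtain ⟨h1, h2, h3, h4⟩ := hGp
  have hGsym : Gᵀ = G := by rw [hG, transpose_mul, transpose_transpose]
  -- Gp is symmetric by uniqueness of the MP inverse
  have hGpsym : Gpᵀ = Gp := by
    refine IsMP.unique_s12 (D := G) ?_ ⟨h1, h2, h3, h4⟩
    refine ⟨?_, ?_, ?_, ?_⟩
    · calc G * Gpᵀ * G = (Gᵀ * Gp * Gᵀ)ᵀ := by
            simp [transpose_mul, mul_assoc]
      _ = G := by rw [hGsym, h1, hGsym]
    · calc Gpᵀ * G * Gpᵀ = (Gp * Gᵀ * Gp)ᵀ := by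
            simp [transpose_mul, mul_assoc]
      _ = Gpᵀ := by rw [hGsym, h2]
    · calc (G * Gpᵀ)ᵀ = Gp * Gᵀ := by simp
      _ = Gp * G := by rw [hGsym]
      _ = (Gp * G)ᵀ := h4.symm
      _ = Gᵀ * Gpᵀ := by rw [transpose_mul]
      _ = G * Gpᵀ := by rw [hGsym]
    · calc (Gpᵀ * G)ᵀ = Gᵀ * Gp := by simp
      _ = G * Gp := by rw [hGsym]
      _ = (G * Gp)ᵀ := h3.symm
      _ = Gpᵀ * Gᵀ := by rw [transpose_mul]
      _ = Gpᵀ * G := by rw [hGsym]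
  -- the key factorization of the Schur complement
  obtain ⟨K, hK⟩ : ∃ X : Matrix (Fin n ⊕ (Fin m ⊕ Fin 1)) (Fin 1) ℝ,
      X = B3 - B2 * (Gp * (B2ᵀ * B3)) := ⟨_, rfl⟩
  have hKT : Kᵀ = B3ᵀ - B3ᵀ * B2 * Gp * B2ᵀ := by
    rw [hK, transpose_sub, transpose_mul, transpose_mul, transpose_mul,
      transpose_transpose, hGpsym]
  have key : Kᵀ * K = g0 - gᵀ * Gp * g := by
    have expand : Kᵀ * K =
        B3ᵀ * B3 - B3ᵀ * B2 * Gp * (B2ᵀ * B3) - B3ᵀ * B2 * Gp * (B2ᵀ * B3)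
          + B3ᵀ * B2 * (Gp * (B2ᵀ * B2) * Gp) * (B2ᵀ * B3) := by
      rw [hKT, hK]
      simp only [Matrix.sub_mul, Matrix.mul_sub, Matrix.mul_assoc]
      abel
    rw [expand, ← hG, h2, hg0, hg, transpose_mul, transpose_transpose]
    abel
  have hCT : Kᴴ = Kᵀ := by ext i j; simp [conjTranspose_apply]
  constructor
  · have := posSemidef_conjTranspose_mul_self K
    rwa [hCT, key] at this
  · intro hzero
    have hK0 : K = 0 := by
      apply conjTranspose_mul_self_eq_zero.mp
      rw [hCT, key, hzero]
    have heq : h - H * Gp * g = B1ᵀ * K := by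
      rw [hK, hh, hH, hg]
      simp only [Matrix.mul_sub, Matrix.mul_assoc]
    rw [heq, hK0, Matrix.mul_zero]
end
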